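/- Let D ⊂ ℝⁿ be nonempty compact, φ : D → (0,∞) continuous and strictly positive, and f : [0,∞) → [0,∞) continuous, strictly increasing and unbounded. Then every global minimum point of H₁(q) = sup_{x ∈ D} φ(x) f(|x − q|) belongs to co(D). -/

import Mathlib

/-!
If `q ∉ co(D)`, let `p` be the nearest point of `co(D)` to `q`; `co(D)` is compact by
Carathéodory's theorem, so `p` exists. The obtuse-angle characterisation of `p` gives
`|x - p| < |x - q|` for every `x ∈ D`, hence `φ(x) f(|x - p|) < φ(x) f(|x - q|) ≤ H₁(q)`.
Since the supremum defining `H₁(p)` is attained on the compact set `D`, `H₁(p) < H₁(q)`,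
so `q` is not a global minimum.
-/

open Set Module
open scoped RealInnerProductSpace

section Caratheodory

variable {𝕜 E : Type*} [Field 𝕜] [LinearOrder 𝕜] [IsStrictOrderedRing 𝕜]
  [AddCommGroup E] [Module 𝕜 E] [FiniteDimensional 𝕜 E] {s : Set E}

theorem exists_fin_finrank_succ_of_mem_convexHull (hs : s.Nonempty) {x : E}
    (hx : x ∈ convexHull 𝕜 s) :
    ∃ w ∈ stdSimplex 𝕜 (Fin (finrank 𝕜 E + 1)), ∃ z ∈ univ.pi fun _ => s,
      ∑ i, w i • z i = x := by
  obtain ⟨d, hd⟩ := hs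
  obtain ⟨ι, _, z, w, hzs, hz, hw₀, hw₁, rfl⟩ := eq_pos_convex_span_of_mem_convexHull hx
  -- Carathéodory bounds the number of points by `finrank + 1`; pad with zero weights.
  obtain ⟨e⟩ : Nonempty (ι ↪ Fin (finrank 𝕜 E + 1)) :=
    Function.Embedding.nonempty_of_card_le <| by
      simpa using hz.card_le_finrank_succ.trans (Nat.succ_le_succ (Submodule.finrank_le _))
  set W := Function.extend e w 0
  set Z := Function.extend e z fun _ => d
  have hW (i : ι) : W (e i) = w i := e.injective.extend_apply _ _ i
  have hZ (i : ι) : Z (e i) = z i := e.injective.extend_apply _ _ i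
  have hW₀ (j) (hj : j ∉ range e) : W j = 0 := Function.extend_apply' _ _ _ hj
  have hZd (j) (hj : j ∉ range e) : Z j = d := Function.extend_apply' _ _ _ hj
  refine ⟨W, ⟨fun j => ?_, ?_⟩, Z, fun j _ => ?_, ?_⟩
  · by_cases hj : j ∈ range e
    · obtain ⟨i, rfl⟩ := hj
      exact hW i ▸ (hw₀ i).le
    · exact (hW₀ j hj).ge
  · rw [← hw₁]
    exact (Fintype.sum_of_injective e e.injective w W hW₀ fun i => (hW i).symm).symm
  · by_cases hj : j ∈ range e
    · obtain ⟨i, rfl⟩ := hj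
      exact hZ i ▸ hzs (mem_range_self i)
    · exact hZd j hj ▸ hd
  · refine (Fintype.sum_of_injective e e.injective _ _ (fun j hj => ?_) fun i => ?_).symm
    · rw [hW₀ j hj, zero_smul]
    · rw [hW, hZ]

theorem IsCompact.convexHull [TopologicalSpace 𝕜] [OrderClosedTopology 𝕜] [ContinuousAdd 𝕜]
    [CompactIccSpace 𝕜] [TopologicalSpace E] [ContinuousAdd E] [ContinuousSMul 𝕜 E] (hs : IsCompact s) :
    IsCompact (_root_.convexHull 𝕜 s) := by
  rcases s.eq_empty_or_nonempty with rfl | hne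
  · simp
  have himage : _root_.convexHull 𝕜 s = (fun p : (Fin (finrank 𝕜 E + 1) → 𝕜) × (Fin _ → E) =>
      ∑ i, p.1 i • p.2 i) '' (stdSimplex 𝕜 _ ×ˢ univ.pi fun _ => s) := by
    refine Subset.antisymm (fun x hx => ?_) ?_
    · obtain ⟨w, hw, z, hz, rfl⟩ := exists_fin_finrank_succ_of_mem_convexHull hne hx
      exact ⟨(w, z), ⟨hw, hz⟩, rfl⟩
    · rintro _ ⟨⟨w, z⟩, ⟨⟨hw₀, hw₁⟩, hz⟩, rfl⟩
      exact (convex_convexHull 𝕜 s).sum_mem (fun i _ => hw₀ i) hw₁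
        fun i _ => subset_convexHull 𝕜 s (hz i (mem_univ i))
  rw [himage]
  exact ((isCompact_stdSimplex 𝕜 _).prod (isCompact_univ_pi fun _ => hs)).image (by fun_prop)

end Caratheodory

theorem norm_sub_lt_norm_sub_of_inner_le_zero {F : Type*} [NormedAddCommGroup F]
    [InnerProductSpace ℝ F] {p q x : F} (hqp : q ≠ p) (h : ⟪q - p, x - p⟫ ≤ 0) :
    ‖x - p‖ < ‖x - q‖ := by
  have hpos : 0 < ‖q - p‖ := norm_pos_iff.mpr (sub_ne_zero.mpr hqp)
  have hsq : ‖x - q‖ ^ 2 = ‖x - p‖ ^ 2 - 2 * ⟪x - p, q - p⟫ + ‖q - p‖ ^ 2 := by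
    rw [← norm_sub_sq_real, sub_sub_sub_cancel_right]
  rw [real_inner_comm] at h
  exact lt_of_pow_lt_pow_left₀ 2 (norm_nonneg _) (by nlinarith)

theorem Convex.exists_mem_forall_norm_sub_lt_of_notMem {F : Type*} [NormedAddCommGroup F]
    [InnerProductSpace ℝ F] {K : Set F} (hK : Convex ℝ K) (hne : K.Nonempty)
    (hc : IsComplete K) {q : F} (hq : q ∉ K) : ∃ p ∈ K, ∀ x ∈ K, ‖x - p‖ < ‖x - q‖ := by
  obtain ⟨p, hpK, hp⟩ := exists_norm_eq_iInf_of_complete_convex hne hc hK q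
  have hinner := (norm_eq_iInf_iff_real_inner_le_zero hK hpK).mp hp
  exact ⟨p, hpK, fun x hx => norm_sub_lt_norm_sub_of_inner_le_zero
    (fun h => hq (h ▸ hpK)) (hinner x hx)⟩

theorem stmt_6_general {n : ℕ} (D : Set (EuclideanSpace ℝ (Fin n)))
    (hD : IsCompact D) (hDne : D.Nonempty)
    (φ : EuclideanSpace ℝ (Fin n) → ℝ) (f : ℝ → ℝ)
    (hφc : ContinuousOn φ D) (hφpos : ∀ x ∈ D, 0 < φ x)
    (hfc : ContinuousOn f (Ici 0)) (hfm : StrictMonoOn f (Ici 0)) :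
    ∀ q : EuclideanSpace ℝ (Fin n),
      (∀ p : EuclideanSpace ℝ (Fin n),
        sSup ((fun x => φ x * f ‖x - q‖) '' D) ≤ sSup ((fun x => φ x * f ‖x - p‖) '' D)) →
      q ∈ convexHull ℝ D := by
  intro q hmin
  by_contra hq
  obtain ⟨p, -, hcloser⟩ := (convex_convexHull ℝ D).exists_mem_forall_norm_sub_lt_of_notMem
    hDne.convexHull hD.convexHull.isClosed.isComplete hq
  have hH (r : EuclideanSpace ℝ (Fin n)) : ContinuousOn (fun x => φ x * f ‖x - r‖) D :=
    hφc.mul <| hfc.comp (by fun_prop) fun x _ => norm_nonneg (x - r)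
  refine (hmin p).not_gt <| (hD.sSup_lt_iff_of_continuous hDne (hH p) _).2 fun x hx => ?_
  calc φ x * f ‖x - p‖ < φ x * f ‖x - q‖ :=
        mul_lt_mul_of_pos_left (hfm (norm_nonneg _) (norm_nonneg _)
          (hcloser x (subset_convexHull ℝ D hx))) (hφpos x hx)
    _ ≤ sSup ((fun x => φ x * f ‖x - q‖) '' D) :=
        le_csSup (hD.bddAbove_image (hH q)) (mem_image_of_mem _ hx)

/-- for strictly positive `φ` and strictly increasing `f`, every global
minimum point of `H₁` belongs to the convex hull of `D`. -/
theorem stmt_6 {n : ℕ} (D : Set (EuclideanSpace ℝ (Fin n)))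
    (hD : IsCompact D) (hDne : D.Nonempty)
    (φ : EuclideanSpace ℝ (Fin n) → ℝ) (f : ℝ → ℝ)
    (hφc : ContinuousOn φ D) (hφpos : ∀ x ∈ D, 0 < φ x)
    (hfc : ContinuousOn f (Ici 0)) (hfm : StrictMonoOn f (Ici 0))
    (hf0 : ∀ s : ℝ, 0 ≤ s → 0 ≤ f s)
    (hfu : ∀ M : ℝ, ∃ s : ℝ, 0 ≤ s ∧ M ≤ f s) :
    ∀ q : EuclideanSpace ℝ (Fin n),
      (∀ p : EuclideanSpace ℝ (Fin n),
        sSup ((fun x => φ x * f ‖x - q‖) '' D) ≤ sSup ((fun x => φ x * f ‖x - p‖) '' D)) →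
      q ∈ convexHull ℝ D :=
  stmt_6_general D hD hDne φ f hφc hφpos hfc hfm
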